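/- arXiv:2402.05434 — 3 statements merged into one kernel-verified Lean document; each statement's English description precedes it below -/
import Mathlib

section
/- Let K be the Read–Bajraktarević operator on the complete metric space F of continuous functions ψ : [p₁,p_N] → ℝ with ψ(p₁) = q₁ and ψ(p_N) = q_N, equipped with the sup metric, defined by (Kψ)(p) = α_i ψ(S_i^{-1}(p)) + g(p) - α_i B_m(g, S_i^{-1}(p)) for p ∈ [p_i, p_{i+1}]. Then Kψ is well-defined and continuous at each interior knot p_i (i.e., the two defining expressions agree at shared endpoints and both equal q_i), Kψ ∈ F, and K is a contraction with ratio max_i |α_i| < 1; hence K has a unique fixed point ψ* satisfying ψ*(p_i) = q_i for all i. -/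
/-!
On `[pᵢ, pᵢ₊₁]` the operator is `x ↦ g x + αᵢ (ψ - Bₘ g) (Sᵢ⁻¹ x)`. Now `Sᵢ⁻¹` maps `pᵢ, pᵢ₊₁` to
`p₁, p_N`, where `ψ` and `Bₘ g` agree, so each piece takes the values `g pᵢ = qᵢ`, `g pᵢ₊₁ = qᵢ₊₁` at
the ends of its interval and the pieces glue to a continuous function with the right end values.
On each piece two images differ by `αᵢ (ψ - φ) ∘ Sᵢ⁻¹`, so `K` contracts the sup distance by
`max |αᵢ|`. The space `𝓕` is a closed subset of `C([p₁, p_N], ℝ)`, and Banach's fixed point theorem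
gives the fixed point, which interpolates the data because it equals its image at every knot.
-/

open Set Function

theorem MonotoneOn.apply_le_of_le_of_mem_Iic {α β : Type*} [Preorder α] [Preorder β] {f : α → β}
    {m i j : α} (hf : MonotoneOn f (Iic m)) (hij : i ≤ j) (hj : j ≤ m) : f i ≤ f j :=
  hf (mem_Iic.2 (hij.trans hj)) (mem_Iic.2 hj) hij

namespace FractalInterpolation

def pinned (u v y₀ y₁ : ℝ) : Set (ℝ → ℝ) :=
  {ψ | ContinuousOn ψ (Icc u v) ∧ ψ u = y₀ ∧ ψ v = y₁}

theorem pinned_nonempty {u v : ℝ} (huv : u < v) (y₀ y₁ : ℝ) : (pinned u v y₀ y₁).Nonempty := by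
  refine ⟨fun x => y₀ + (x - u) / (v - u) * (y₁ - y₀), by fun_prop, by simp, ?_⟩
  show y₀ + (v - u) / (v - u) * (y₁ - y₀) = y₁
  rw [div_self (sub_ne_zero.2 huv.ne')]
  ring

theorem exists_fixedPoint_of_contraction {u v y₀ y₁ s : ℝ} (huv : u < v) (hs₀ : 0 ≤ s)
    (hs : s < 1) {K : (ℝ → ℝ) → ℝ → ℝ} (hK_mem : MapsTo K (pinned u v y₀ y₁) (pinned u v y₀ y₁))
    (hK : ∀ ψ ∈ pinned u v y₀ y₁, ∀ φ ∈ pinned u v y₀ y₁, ∀ C : ℝ,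
      (∀ y ∈ Icc u v, |ψ y - φ y| ≤ C) → ∀ x ∈ Icc u v, |K ψ x - K φ x| ≤ s * C) :
    ∃ ψ ∈ pinned u v y₀ y₁, EqOn (K ψ) ψ (Icc u v) ∧
      ∀ φ ∈ pinned u v y₀ y₁, EqOn (K φ) φ (Icc u v) → EqOn φ ψ (Icc u v) := by
  have : CompactSpace (Icc u v) := isCompact_iff_compactSpace.mp isCompact_Icc
  have hu : u ∈ Icc u v := left_mem_Icc.2 huv.le
  have hv : v ∈ Icc u v := right_mem_Icc.2 huv.le
  -- `pinned u v y₀ y₁`, up to equality on `[u, v]`, as a closed subset of `C([u, v], ℝ)`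
  let E : Set C(Icc u v, ℝ) := {f | f ⟨u, hu⟩ = y₀ ∧ f ⟨v, hv⟩ = y₁}
  have : CompleteSpace E :=
    ((isClosed_eq (continuous_eval_const _) continuous_const).inter
      (isClosed_eq (continuous_eval_const _) continuous_const)).isComplete.completeSpace_coe
  let res (ψ : ℝ → ℝ) (hψ : ψ ∈ pinned u v y₀ y₁) : E :=
    ⟨⟨(Icc u v).domRestrict ψ, hψ.1.domRestrict⟩, hψ.2⟩
  have extend_mem (f : E) : IccExtend huv.le f.1 ∈ pinned u v y₀ y₁ :=
    ⟨f.1.continuous.Icc_extend'.continuousOn, by rw [IccExtend_left]; exact f.2.1,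
      by rw [IccExtend_right]; exact f.2.2⟩
  let T (f : E) : E := res (K (IccExtend huv.le f.1)) (hK_mem (extend_mem f))
  have hK_congr {ψ φ} (hψ : ψ ∈ pinned u v y₀ y₁) (hφ : φ ∈ pinned u v y₀ y₁)
      (h : EqOn ψ φ (Icc u v)) : EqOn (K ψ) (K φ) (Icc u v) := fun x hx =>
    sub_eq_zero.1 <| abs_nonpos_iff.1 <| by
      simpa using hK ψ hψ φ hφ 0 (fun y hy => by simp [h hy]) x hx
  have hT : ContractingWith ⟨s, hs₀⟩ T := by
    refine ⟨hs, LipschitzWith.of_dist_le_mul fun f h => ?_⟩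
    rw [Subtype.dist_eq, ContinuousMap.dist_le (by positivity)]
    refine fun x => (Real.dist_eq _ _).trans_le (hK _ (extend_mem f) _ (extend_mem h) _ ?_ x x.2)
    intro y hy
    rw [IccExtend_of_mem _ _ hy, IccExtend_of_mem _ _ hy, ← Real.dist_eq, Subtype.dist_eq]
    exact ContinuousMap.dist_apply_le_dist _
  obtain ⟨ψ₀, hψ₀⟩ := pinned_nonempty huv y₀ y₁
  have : Nonempty E := ⟨res ψ₀ hψ₀⟩
  obtain ⟨f₀, hf₀⟩ : ∃ f₀, IsFixedPt T f₀ := ⟨_, hT.fixedPoint_isFixedPt⟩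
  refine ⟨_, extend_mem f₀, fun x hx => ?_, fun φ hφ hfix x hx => ?_⟩
  · rw [IccExtend_of_mem _ _ hx]
    exact congr_arg (fun f : E => f.1 ⟨x, hx⟩) hf₀
  · have hφ_fixed : IsFixedPt T (res φ hφ) := Subtype.ext <| ContinuousMap.ext fun y =>
      (hK_congr (extend_mem _) hφ (fun z hz => IccExtend_of_mem _ _ hz) y.2).trans (hfix y.2)
    rw [IccExtend_of_mem _ _ hx, ← hT.fixedPoint_unique' hφ_fixed hf₀]
    rfl

noncomputable def glue (p : ℕ → ℝ) (f : ℕ → ℝ → ℝ) : ℕ → ℝ → ℝ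
  | 0 => f 0
  | n + 1 => fun x => if x ≤ p (n + 1) then glue p f n x else f (n + 1) x

section Glue

variable {p : ℕ → ℝ} {f : ℕ → ℝ → ℝ} {n : ℕ}

theorem exists_mem_Icc_of_mem_Icc {x : ℝ} (hx : x ∈ Icc (p 0) (p (n + 1))) :
    ∃ i ≤ n, x ∈ Icc (p i) (p (i + 1)) := by
  induction n with
  | zero => exact ⟨0, le_rfl, hx⟩
  | succ n ih =>
    by_cases hxn : x ≤ p (n + 1)
    · obtain ⟨i, hi, hxi⟩ := ih ⟨hx.1, hxn⟩
      exact ⟨i, hi.trans n.le_succ, hxi⟩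
    · exact ⟨n + 1, le_rfl, (not_le.1 hxn).le, hx.2⟩

theorem Icc_subset_Icc_of_monotoneOn (hp : MonotoneOn p (Iic (n + 1))) {i : ℕ} (hi : i ≤ n) :
    Icc (p i) (p (i + 1)) ⊆ Icc (p 0) (p (n + 1)) :=
  Icc_subset_Icc (hp.apply_le_of_le_of_mem_Iic (Nat.zero_le i) (by omega))
    (hp.apply_le_of_le_of_mem_Iic (by omega) le_rfl)

theorem glue_eqOn (hp : MonotoneOn p (Iic (n + 1)))
    (hf : ∀ i < n, f i (p (i + 1)) = f (i + 1) (p (i + 1))) {i : ℕ} (hi : i ≤ n) :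
    EqOn (glue p f n) (f i) (Icc (p i) (p (i + 1))) := by
  induction n generalizing i with
  | zero => obtain rfl := Nat.le_zero.1 hi; exact fun _ _ => rfl
  | succ n ih =>
    have ih' {j : ℕ} (hj : j ≤ n) :=
      ih (hp.mono (Iic_subset_Iic.2 (n + 1).le_succ)) (fun k hk => hf k (by omega)) hj
    intro x hx
    rcases hi.lt_or_eq with hi | rfl
    · have hxn : x ≤ p (n + 1) := hx.2.trans (hp.apply_le_of_le_of_mem_Iic (by omega) (by omega))
      simp only [glue, if_pos hxn]
      exact ih' (by omega) hx
    · by_cases hxn : x ≤ p (n + 1)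
      · obtain rfl : x = p (n + 1) := le_antisymm hxn hx.1
        simp only [glue, if_pos le_rfl]
        rw [ih' le_rfl ⟨hp.apply_le_of_le_of_mem_Iic n.le_succ (by omega), le_rfl⟩,
          hf n n.lt_succ_self]
      · simp only [glue, if_neg hxn]

theorem continuousOn_glue (hp : MonotoneOn p (Iic (n + 1)))
    (hf : ∀ i < n, f i (p (i + 1)) = f (i + 1) (p (i + 1)))
    (hc : ∀ i ≤ n, ContinuousOn (f i) (Icc (p i) (p (i + 1)))) :
    ContinuousOn (glue p f n) (Icc (p 0) (p (n + 1))) := by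
  induction n with
  | zero => exact hc 0 le_rfl
  | succ n ih =>
    have hlow : ContinuousOn (glue p f (n + 1)) (Icc (p 0) (p (n + 1))) :=
      (ih (hp.mono (Iic_subset_Iic.2 (n + 1).le_succ)) (fun i hi => hf i (by omega))
        fun i hi => hc i (by omega)).congr fun x hx => if_pos hx.2
    have hhigh := (hc (n + 1) le_rfl).congr (glue_eqOn hp hf le_rfl)
    rw [← Icc_union_Icc_eq_Icc (hp.apply_le_of_le_of_mem_Iic (Nat.zero_le (n + 1)) (by omega))
      (hp.apply_le_of_le_of_mem_Iic (n + 1).le_succ le_rfl)]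
    exact hlow.union_of_isClosed hhigh isClosed_Icc isClosed_Icc

end Glue

structure IsPiecewiseContraction (n : ℕ) (p q : ℕ → ℝ) (s : ℝ)
    (f : (ℝ → ℝ) → ℕ → ℝ → ℝ) : Prop where
  strictMonoOn : StrictMonoOn p (Iic (n + 1))
  continuousOn : ∀ ψ ∈ pinned (p 0) (p (n + 1)) (q 0) (q (n + 1)), ∀ i ≤ n,
    ContinuousOn (f ψ i) (Icc (p i) (p (i + 1)))
  apply_left : ∀ ψ ∈ pinned (p 0) (p (n + 1)) (q 0) (q (n + 1)), ∀ i ≤ n, f ψ i (p i) = q i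
  apply_right : ∀ ψ ∈ pinned (p 0) (p (n + 1)) (q 0) (q (n + 1)), ∀ i ≤ n,
    f ψ i (p (i + 1)) = q (i + 1)
  abs_sub_le : ∀ ψ ∈ pinned (p 0) (p (n + 1)) (q 0) (q (n + 1)),
    ∀ φ ∈ pinned (p 0) (p (n + 1)) (q 0) (q (n + 1)), ∀ C : ℝ,
    (∀ y ∈ Icc (p 0) (p (n + 1)), |ψ y - φ y| ≤ C) →
    ∀ i ≤ n, ∀ x ∈ Icc (p i) (p (i + 1)), |f ψ i x - f φ i x| ≤ s * C

namespace IsPiecewiseContraction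

variable {n : ℕ} {p q : ℕ → ℝ} {s : ℝ} {f : (ℝ → ℝ) → ℕ → ℝ → ℝ} {ψ φ : ℝ → ℝ}

theorem monotoneOn (H : IsPiecewiseContraction n p q s f) : MonotoneOn p (Iic (n + 1)) :=
  H.strictMonoOn.monotoneOn

theorem apply_right_eq_apply_left (H : IsPiecewiseContraction n p q s f)
    (hψ : ψ ∈ pinned (p 0) (p (n + 1)) (q 0) (q (n + 1))) {i : ℕ} (hi : i < n) :
    f ψ i (p (i + 1)) = f ψ (i + 1) (p (i + 1)) :=
  (H.apply_right ψ hψ i hi.le).trans (H.apply_left ψ hψ (i + 1) hi).symm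

theorem glue_eqOn (H : IsPiecewiseContraction n p q s f)
    (hψ : ψ ∈ pinned (p 0) (p (n + 1)) (q 0) (q (n + 1))) {i : ℕ} (hi : i ≤ n) :
    EqOn (glue p (f ψ) n) (f ψ i) (Icc (p i) (p (i + 1))) :=
  FractalInterpolation.glue_eqOn H.monotoneOn (fun _ => H.apply_right_eq_apply_left hψ) hi

theorem glue_mem (H : IsPiecewiseContraction n p q s f)
    (hψ : ψ ∈ pinned (p 0) (p (n + 1)) (q 0) (q (n + 1))) :
    glue p (f ψ) n ∈ pinned (p 0) (p (n + 1)) (q 0) (q (n + 1)) := by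
  refine ⟨continuousOn_glue H.monotoneOn (fun _ => H.apply_right_eq_apply_left hψ)
    (H.continuousOn ψ hψ), ?_, ?_⟩
  · rw [H.glue_eqOn hψ (Nat.zero_le n)
      ⟨le_rfl, H.monotoneOn.apply_le_of_le_of_mem_Iic zero_le_one (by omega)⟩,
      H.apply_left ψ hψ 0 (Nat.zero_le n)]
  · rw [H.glue_eqOn hψ le_rfl ⟨H.monotoneOn.apply_le_of_le_of_mem_Iic n.le_succ le_rfl, le_rfl⟩,
      H.apply_right ψ hψ n le_rfl]

theorem abs_sub_le_of_eqOn (H : IsPiecewiseContraction n p q s f)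
    (hψ : ψ ∈ pinned (p 0) (p (n + 1)) (q 0) (q (n + 1)))
    (hφ : φ ∈ pinned (p 0) (p (n + 1)) (q 0) (q (n + 1))) {Kψ Kφ : ℝ → ℝ}
    (hKψ : ∀ i ≤ n, EqOn Kψ (f ψ i) (Icc (p i) (p (i + 1))))
    (hKφ : ∀ i ≤ n, EqOn Kφ (f φ i) (Icc (p i) (p (i + 1)))) {C : ℝ}
    (hC : ∀ y ∈ Icc (p 0) (p (n + 1)), |ψ y - φ y| ≤ C) :
    ∀ x ∈ Icc (p 0) (p (n + 1)), |Kψ x - Kφ x| ≤ s * C := fun x hx => by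
  obtain ⟨i, hi, hxi⟩ := exists_mem_Icc_of_mem_Icc hx
  rw [hKψ i hi hxi, hKφ i hi hxi]
  exact H.abs_sub_le ψ hψ φ hφ C hC i hi x hxi

theorem exists_fixedPoint (H : IsPiecewiseContraction n p q s f) (hs₀ : 0 ≤ s) (hs : s < 1) :
    ∃ ψ ∈ pinned (p 0) (p (n + 1)) (q 0) (q (n + 1)),
      (∀ i ≤ n, EqOn ψ (f ψ i) (Icc (p i) (p (i + 1)))) ∧
      ∀ φ ∈ pinned (p 0) (p (n + 1)) (q 0) (q (n + 1)),
        (∀ i ≤ n, EqOn φ (f φ i) (Icc (p i) (p (i + 1)))) →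
        EqOn ψ φ (Icc (p 0) (p (n + 1))) := by
  obtain ⟨ψ, hψ, hfix, huniq⟩ := exists_fixedPoint_of_contraction
    (H.strictMonoOn (mem_Iic.2 (Nat.zero_le _)) (mem_Iic.2 le_rfl) n.succ_pos) hs₀ hs
    (fun ψ hψ => H.glue_mem hψ) fun ψ hψ φ hφ C hC =>
      H.abs_sub_le_of_eqOn hψ hφ (fun i hi => H.glue_eqOn hψ hi) (fun i hi => H.glue_eqOn hφ hi) hC
  refine ⟨ψ, hψ, fun i hi x hx => ?_, fun φ hφ hφ_fix x hx => ?_⟩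
  · rw [← hfix (Icc_subset_Icc_of_monotoneOn H.monotoneOn hi hx), H.glue_eqOn hψ hi hx]
  · refine (huniq φ hφ (fun y hy => ?_) hx).symm
    obtain ⟨i, hi, hyi⟩ := exists_mem_Icc_of_mem_Icc hy
    rw [H.glue_eqOn hφ hi hyi, hφ_fix i hi hyi]

theorem apply_knot_of_eqOn (H : IsPiecewiseContraction n p q s f)
    (hψ : ψ ∈ pinned (p 0) (p (n + 1)) (q 0) (q (n + 1)))
    (hψ_fix : ∀ i ≤ n, EqOn ψ (f ψ i) (Icc (p i) (p (i + 1)))) {i : ℕ} (hi : i ≤ n + 1) :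
    ψ (p i) = q i := by
  rcases i with _ | i
  · exact hψ.2.1
  · rw [hψ_fix i (by omega) ⟨H.monotoneOn.apply_le_of_le_of_mem_Iic i.le_succ hi, le_rfl⟩,
      H.apply_right ψ hψ i (by omega)]

end IsPiecewiseContraction

-- With `S x = a * x + b`, this is `α ψ (S⁻¹ x) + g x - α B (S⁻¹ x)`.
noncomputable def fractalPiece (α a b : ℝ) (g B ψ : ℝ → ℝ) (x : ℝ) : ℝ :=
  α * ψ ((x - b) / a) + g x - α * B ((x - b) / a)

section FractalPiece

variable {α a b : ℝ} {g B ψ φ : ℝ → ℝ}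

theorem fractalPiece_affine (ha : a ≠ 0) (y : ℝ) :
    fractalPiece α a b g B ψ (a * y + b) = g (a * y + b) + α * (ψ y - B y) := by
  simp only [fractalPiece, add_sub_cancel_right, mul_div_cancel_left₀ y ha]
  ring

theorem continuousOn_fractalPiece {s t : Set ℝ} (hψ : ContinuousOn ψ t) (hB : ContinuousOn B t)
    (hg : ContinuousOn g s) (hst : MapsTo (fun x => (x - b) / a) s t) :
    ContinuousOn (fractalPiece α a b g B ψ) s := by
  have hS : ContinuousOn (fun x : ℝ => (x - b) / a) s := by fun_prop
  exact ((continuousOn_const.mul (hψ.comp hS hst)).add hg).sub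
    (continuousOn_const.mul (hB.comp hS hst))

theorem abs_fractalPiece_sub_le {s C x : ℝ} (hα : |α| ≤ s)
    (hC : |ψ ((x - b) / a) - φ ((x - b) / a)| ≤ C) :
    |fractalPiece α a b g B ψ x - fractalPiece α a b g B φ x| ≤ s * C := by
  have hdiff : fractalPiece α a b g B ψ x - fractalPiece α a b g B φ x =
      α * (ψ ((x - b) / a) - φ ((x - b) / a)) := by
    simp only [fractalPiece]
    ring
  rw [hdiff, abs_mul]
  exact mul_le_mul hα hC (abs_nonneg _) ((abs_nonneg α).trans hα)

theorem mapsTo_affine_inv_Icc {u v : ℝ} (ha : 0 < a) :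
    MapsTo (fun x => (x - b) / a) (Icc (a * u + b) (a * v + b)) (Icc u v) := fun x hx =>
  ⟨(le_div_iff₀ ha).2 (by linarith [hx.1]), (div_le_iff₀ ha).2 (by linarith [hx.2])⟩

end FractalPiece

theorem isPiecewiseContraction_fractalPiece {n : ℕ} {p q a b α : ℕ → ℝ} {s : ℝ} {g B : ℝ → ℝ}
    (hp : ∀ i ≤ n, p i < p (i + 1))
    (hS₀ : ∀ i ≤ n, a i * p 0 + b i = p i) (hS₁ : ∀ i ≤ n, a i * p (n + 1) + b i = p (i + 1))
    (hα : ∀ i ≤ n, |α i| ≤ s)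
    (hg : ContinuousOn g (Icc (p 0) (p (n + 1)))) (hgq : ∀ i ≤ n + 1, g (p i) = q i)
    (hB : ContinuousOn B (Icc (p 0) (p (n + 1)))) (hB₀ : B (p 0) = q 0)
    (hB₁ : B (p (n + 1)) = q (n + 1)) :
    IsPiecewiseContraction n p q s fun ψ i => fractalPiece (α i) (a i) (b i) g B ψ := by
  have hmono : StrictMonoOn p (Iic (n + 1)) :=
    strictMonoOn_Iic_of_lt_succ fun i hi => by simpa using hp i (by omega)
  have hp_ends : p 0 < p (n + 1) :=
    hmono (mem_Iic.2 (Nat.zero_le _)) (mem_Iic.2 le_rfl) n.succ_pos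
  have ha : ∀ i ≤ n, 0 < a i := fun i hi => by
    refine pos_of_mul_pos_left (b := p (n + 1) - p 0) ?_ (sub_pos.2 hp_ends).le
    linarith [hS₀ i hi, hS₁ i hi, hp i hi]
  have hmaps : ∀ i ≤ n, MapsTo (fun x => (x - b i) / a i) (Icc (p i) (p (i + 1)))
      (Icc (p 0) (p (n + 1))) := fun i hi => by
    rw [← hS₀ i hi, ← hS₁ i hi]
    exact mapsTo_affine_inv_Icc (ha i hi)
  refine ⟨hmono,
    fun ψ hψ i hi => continuousOn_fractalPiece hψ.1 hB
      (hg.mono (Icc_subset_Icc_of_monotoneOn hmono.monotoneOn hi)) (hmaps i hi),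
    fun ψ hψ i hi => ?_, fun ψ hψ i hi => ?_,
    fun ψ hψ φ hφ C hC i hi x hx => abs_fractalPiece_sub_le (hα i hi) (hC _ (hmaps i hi hx))⟩
  · rw [← hS₀ i hi, fractalPiece_affine (ha i hi).ne', hψ.2.1, hB₀, sub_self, mul_zero,
      add_zero, hS₀ i hi, hgq i (by omega)]
  · rw [← hS₁ i hi, fractalPiece_affine (ha i hi).ne', hψ.2.2, hB₁, sub_self, mul_zero,
      add_zero, hS₁ i hi, hgq (i + 1) (by omega)]

end FractalInterpolation

open FractalInterpolation in
theorem read_bajraktarevic_operator_general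
    (N : ℕ) (hN : 2 ≤ N) (p q : ℕ → ℝ)
    (hp : ∀ i, i + 1 < N → p i < p (i + 1))
    (a b α : ℕ → ℝ)
    (hS₁ : ∀ i, i + 1 < N → a i * p 0 + b i = p i)
    (hSN : ∀ i, i + 1 < N → a i * p (N - 1) + b i = p (i + 1))
    (s : ℝ) (hs : s < 1) (hαs : ∀ i, i + 1 < N → |α i| ≤ s)
    (g Bm : ℝ → ℝ)
    (hgc : ContinuousOn g (Set.Icc (p 0) (p (N - 1))))
    (hgi : ∀ i, i < N → g (p i) = q i)
    (hBc : ContinuousOn Bm (Set.Icc (p 0) (p (N - 1))))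
    (hB₁ : Bm (p 0) = q 0) (hBN : Bm (p (N - 1)) = q (N - 1))
    -- `Fprop ψ` says `ψ` belongs to the complete metric space `𝓕`
    (Fprop : (ℝ → ℝ) → Prop)
    (hF : ∀ ψ, Fprop ψ ↔ ContinuousOn ψ (Set.Icc (p 0) (p (N - 1))) ∧
      ψ (p 0) = q 0 ∧ ψ (p (N - 1)) = q (N - 1))
    -- `Kfun ψ i` is the defining expression of `Kψ` on the `i`-th subinterval
    (Kfun : (ℝ → ℝ) → ℕ → ℝ → ℝ)
    (hK : ∀ ψ i x, Kfun ψ i x =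
      α i * ψ ((x - b i) / a i) + g x - α i * Bm ((x - b i) / a i)) :
    -- well-definedness and continuity at the shared knots
    (∀ ψ, Fprop ψ → ∀ i, i + 2 < N →
      Kfun ψ i (p (i + 1)) = q (i + 1) ∧ Kfun ψ (i + 1) (p (i + 1)) = q (i + 1)) ∧
    -- `K` maps `F` into `F`
    (∀ ψ, Fprop ψ → ∃ Kψ : ℝ → ℝ, Fprop Kψ ∧
      ∀ i, i + 1 < N → ∀ x ∈ Set.Icc (p i) (p (i + 1)), Kψ x = Kfun ψ i x) ∧
    -- `K` is a contraction with ratio `s = max_i |α i| < 1`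
    (∀ ψ φ Kψ Kφ : ℝ → ℝ, Fprop ψ → Fprop φ →
      (∀ i, i + 1 < N → ∀ x ∈ Set.Icc (p i) (p (i + 1)), Kψ x = Kfun ψ i x) →
      (∀ i, i + 1 < N → ∀ x ∈ Set.Icc (p i) (p (i + 1)), Kφ x = Kfun φ i x) →
      ∀ C : ℝ, (∀ y ∈ Set.Icc (p 0) (p (N - 1)), |ψ y - φ y| ≤ C) →
        ∀ x ∈ Set.Icc (p 0) (p (N - 1)), |Kψ x - Kφ x| ≤ s * C) ∧
    -- existence of a fixed point, unique on `[p₁,p_N]`, interpolating the data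
    (∃ ψ : ℝ → ℝ, Fprop ψ ∧
      (∀ i, i + 1 < N → ∀ x ∈ Set.Icc (p i) (p (i + 1)), ψ x = Kfun ψ i x) ∧
      (∀ i, i < N → ψ (p i) = q i) ∧
      (∀ φ : ℝ → ℝ, Fprop φ →
        (∀ i, i + 1 < N → ∀ x ∈ Set.Icc (p i) (p (i + 1)), φ x = Kfun φ i x) →
        Set.EqOn ψ φ (Set.Icc (p 0) (p (N - 1))))) := by
  obtain ⟨n, rfl⟩ : ∃ n, N = n + 2 := ⟨N - 2, by omega⟩
  obtain rfl : Fprop = (· ∈ pinned (p 0) (p (n + 1)) (q 0) (q (n + 1))) :=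
    funext fun ψ => propext (hF ψ)
  obtain rfl : Kfun = fun ψ i => fractalPiece (α i) (a i) (b i) g Bm ψ :=
    funext fun ψ => funext fun i => funext (hK ψ i)
  have H : IsPiecewiseContraction n p q s fun ψ i => fractalPiece (α i) (a i) (b i) g Bm ψ :=
    isPiecewiseContraction_fractalPiece (fun i hi => hp i (by omega))
      (fun i hi => hS₁ i (by omega)) (fun i hi => hSN i (by omega))
      (fun i hi => hαs i (by omega)) hgc (fun i hi => hgi i (by omega)) hBc hB₁ hBN
  refine ⟨fun ψ hψ i hi => ⟨H.apply_right ψ hψ i (by omega), H.apply_left ψ hψ (i + 1) (by omega)⟩,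
    fun ψ hψ => ⟨_, H.glue_mem hψ, fun i hi => H.glue_eqOn hψ (by omega)⟩,
    fun ψ φ Kψ Kφ hψ hφ hKψ hKφ C hC => H.abs_sub_le_of_eqOn hψ hφ
      (fun i hi => hKψ i (by omega)) (fun i hi => hKφ i (by omega)) hC, ?_⟩
  obtain ⟨ψ, hψ, hψ_fix, hψ_uniq⟩ :=
    H.exists_fixedPoint ((abs_nonneg _).trans (hαs 0 (by omega))) hs
  exact ⟨ψ, hψ, fun i hi => hψ_fix i (by omega),
    fun i hi => H.apply_knot_of_eqOn hψ hψ_fix (by omega),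
    fun φ hφ hφ_fix => hψ_uniq φ hφ fun i hi => hφ_fix i (by omega)⟩

/-- The Read–Bajraktarević operator
`(Kψ)(x) = αᵢ ψ(Sᵢ⁻¹(x)) + g(x) - αᵢ Bₘ(g, Sᵢ⁻¹(x))` for `x ∈ [pᵢ, pᵢ₊₁]`
is well defined at the shared knots (both defining expressions equal `qᵢ`
there), maps the space `F` of continuous functions on `[p₁,p_N]` with the
endpoint values into itself, and is a contraction with ratio
`max_i |αᵢ| < 1`; hence it has a (unique on `[p₁,p_N]`) fixed point, which
interpolates all the data.  (Indices `0,…,N-1` correspond to `1,…,N`.) -/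
theorem read_bajraktarevic_operator
    (N : ℕ) (hN : 2 ≤ N) (p q : ℕ → ℝ)
    (hp : ∀ i, i + 1 < N → p i < p (i + 1))
    (a b α : ℕ → ℝ)
    (ha : ∀ i, i + 1 < N → a i ≠ 0)
    (hS₁ : ∀ i, i + 1 < N → a i * p 0 + b i = p i)
    (hSN : ∀ i, i + 1 < N → a i * p (N - 1) + b i = p (i + 1))
    (s : ℝ) (hs : s < 1) (hαs : ∀ i, i + 1 < N → |α i| ≤ s)
    (g Bm : ℝ → ℝ)
    (hgc : ContinuousOn g (Set.Icc (p 0) (p (N - 1))))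
    (hgi : ∀ i, i < N → g (p i) = q i)
    (hBc : ContinuousOn Bm (Set.Icc (p 0) (p (N - 1))))
    (hB₁ : Bm (p 0) = q 0) (hBN : Bm (p (N - 1)) = q (N - 1))
    -- `Fprop ψ` says `ψ` belongs to the complete metric space `𝓕`
    (Fprop : (ℝ → ℝ) → Prop)
    (hF : ∀ ψ, Fprop ψ ↔ ContinuousOn ψ (Set.Icc (p 0) (p (N - 1))) ∧
      ψ (p 0) = q 0 ∧ ψ (p (N - 1)) = q (N - 1))
    -- `Kfun ψ i` is the defining expression of `Kψ` on the `i`-th subinterval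
    (Kfun : (ℝ → ℝ) → ℕ → ℝ → ℝ)
    (hK : ∀ ψ i x, Kfun ψ i x =
      α i * ψ ((x - b i) / a i) + g x - α i * Bm ((x - b i) / a i)) :
    -- well-definedness and continuity at the shared knots
    (∀ ψ, Fprop ψ → ∀ i, i + 2 < N →
      Kfun ψ i (p (i + 1)) = q (i + 1) ∧ Kfun ψ (i + 1) (p (i + 1)) = q (i + 1)) ∧
    -- `K` maps `F` into `F`
    (∀ ψ, Fprop ψ → ∃ Kψ : ℝ → ℝ, Fprop Kψ ∧
      ∀ i, i + 1 < N → ∀ x ∈ Set.Icc (p i) (p (i + 1)), Kψ x = Kfun ψ i x) ∧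
    -- `K` is a contraction with ratio `s = max_i |α i| < 1`
    (∀ ψ φ Kψ Kφ : ℝ → ℝ, Fprop ψ → Fprop φ →
      (∀ i, i + 1 < N → ∀ x ∈ Set.Icc (p i) (p (i + 1)), Kψ x = Kfun ψ i x) →
      (∀ i, i + 1 < N → ∀ x ∈ Set.Icc (p i) (p (i + 1)), Kφ x = Kfun φ i x) →
      ∀ C : ℝ, (∀ y ∈ Set.Icc (p 0) (p (N - 1)), |ψ y - φ y| ≤ C) →
        ∀ x ∈ Set.Icc (p 0) (p (N - 1)), |Kψ x - Kφ x| ≤ s * C) ∧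
    -- existence of a fixed point, unique on `[p₁,p_N]`, interpolating the data
    (∃ ψ : ℝ → ℝ, Fprop ψ ∧
      (∀ i, i + 1 < N → ∀ x ∈ Set.Icc (p i) (p (i + 1)), ψ x = Kfun ψ i x) ∧
      (∀ i, i < N → ψ (p i) = q i) ∧
      (∀ φ : ℝ → ℝ, Fprop φ →
        (∀ i, i + 1 < N → ∀ x ∈ Set.Icc (p i) (p (i + 1)), φ x = Kfun φ i x) →
        Set.EqOn ψ φ (Set.Icc (p 0) (p (N - 1))))) :=
  read_bajraktarevic_operator_general N hN p q hp a b α hS₁ hSN s hs hαs g Bm hgc hgi hBc hB₁ hBN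
    Fprop hF Kfun hK
end

section
/- With first-degree Bernstein polynomial B₁(g,p) = ((q_N-q₁)p)/(p_N-p₁) + (p_N q₁ - p₁ q_N)/(p_N-p₁) and g∘S_i(p) = A_i p + B_i, the fractal integral formula reduces to M₁ = [((p_N²-p₁²)/2) Σ_i a_i A_i + (p_N-p₁) Σ_i a_i B_i − Σ_i α_i a_i ((p_N+p₁)(q_N-q₁)/2 + p_N q₁ − p₁ q_N)] / (1 − Σ_i a_i α_i). -/
open intervalIntegral

lemma lin_int_aux (e f u v : ℝ) :
    ∫ x in u..v, (e * x + f) = e * (v ^ 2 - u ^ 2) / 2 + f * (v - u) := by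
  have h1 : IntervalIntegrable (fun x : ℝ => e * x) MeasureTheory.volume u v :=
    (continuous_const.mul continuous_id).intervalIntegrable _ _
  have h2 : IntervalIntegrable (fun _ : ℝ => f) MeasureTheory.volume u v :=
    intervalIntegrable_const
  rw [intervalIntegral.integral_add h1 h2, intervalIntegral.integral_const,
    intervalIntegral.integral_const_mul, integral_id]
  simp [smul_eq_mul]; ring

/-- Numerical integration formula with the first-degree Bernstein polynomial
in the IFS:
`M₁ = [((p_N²-p₁²)/2) Σ aᵢAᵢ + (p_N-p₁) Σ aᵢBᵢ
       − Σ αᵢaᵢ((p_N+p₁)(q_N-q₁)/2 + p_N q₁ − p₁ q_N)] / (1 − Σ aᵢαᵢ)`.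
(Indices `0,…,N-1` correspond to `1,…,N`; maps `i = 0,…,N-2`.) -/
theorem fractal_integral_bernstein_one
    (N : ℕ) (hN : 2 ≤ N) (p : ℕ → ℝ)
    (hp : ∀ i, i + 1 < N → p i < p (i + 1))
    (p₁ pN q₁ qN : ℝ) (hp₁ : p₁ = p 0) (hpN : pN = p (N - 1))
    (a b α A B : ℕ → ℝ)
    (ha : ∀ i, i + 1 < N → a i = (p (i + 1) - p i) / (pN - p₁))
    (hS₁ : ∀ i, i + 1 < N → a i * p₁ + b i = p i)
    (hSN : ∀ i, i + 1 < N → a i * pN + b i = p (i + 1))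
    (hα : ∀ i, i + 1 < N → |α i| < 1)
    (ψ : ℝ → ℝ) (hψc : ContinuousOn ψ (Set.Icc p₁ pN))
    (hself : ∀ i, i + 1 < N → ∀ x ∈ Set.Icc p₁ pN,
      ψ (a i * x + b i) = α i * ψ x + A i * x + B i -
        α i * ((qN - q₁) * x / (pN - p₁) + (pN * q₁ - p₁ * qN) / (pN - p₁)))
    (hden : ∑ i ∈ Finset.range (N - 1), α i * a i ≠ 1) :
    ∫ x in p₁..pN, ψ x =
      (((pN ^ 2 - p₁ ^ 2) / 2) * ∑ i ∈ Finset.range (N - 1), a i * A i +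
        (pN - p₁) * ∑ i ∈ Finset.range (N - 1), a i * B i -
        ∑ i ∈ Finset.range (N - 1),
          α i * a i * ((pN + p₁) * (qN - q₁) / 2 + pN * q₁ - p₁ * qN)) /
      (1 - ∑ i ∈ Finset.range (N - 1), a i * α i) := by
  -- monotonicity of p on {0,…,N-1}
  have hmono : ∀ j, j < N → ∀ i, i ≤ j → p i ≤ p j := by
    intro j hj
    induction j with
    | zero => intro i hi; rw [Nat.le_zero.mp hi]
    | succ k ih =>
      intro i hi
      rcases Nat.eq_or_lt_of_le hi with h | h
      · rw [h]
      · exact le_trans (ih (by omega) i (by omega)) (le_of_lt (hp k hj))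
  have hp1N : p₁ < pN := by
    rw [hp₁, hpN]
    calc p 0 < p 1 := hp 0 (by omega)
    _ ≤ p (N - 1) := hmono (N - 1) (by omega) 1 (by omega)
  have hsub : pN - p₁ ≠ 0 := by linarith
  have hbound : ∀ i, i + 1 < N → p₁ ≤ p i ∧ p (i + 1) ≤ pN := by
    intro i hi
    constructor
    · rw [hp₁]
      rcases Nat.eq_zero_or_pos i with h | h
      · rw [h]
      · exact le_of_lt (lt_of_lt_of_le (hp 0 (by omega))
          (hmono i (by omega) 1 (by omega)))
    · rw [hpN]; exact hmono (N - 1) (by omega) (i + 1) (by omega)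
  have hapos : ∀ i, i + 1 < N → 0 < a i := by
    intro i hi
    rw [ha i hi]
    exact div_pos (by linarith [hp i hi]) (by linarith)
  -- integrability
  have hψint : IntervalIntegrable ψ MeasureTheory.volume p₁ pN := by
    apply ContinuousOn.intervalIntegrable
    rwa [Set.uIcc_of_le hp1N.le]
  have hint : ∀ i, i + 1 < N → IntervalIntegrable ψ MeasureTheory.volume (p i) (p (i + 1)) := by
    intro i hi
    apply ContinuousOn.intervalIntegrable
    apply hψc.mono
    rw [Set.uIcc_of_le (hp i hi).le]
    exact Set.Icc_subset_Icc (hbound i hi).1 (hbound i hi).2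
  set M : ℝ := ∫ x in p₁..pN, ψ x with hM
  set K : ℝ := (pN + p₁) * (qN - q₁) / 2 + pN * q₁ - p₁ * qN with hK
  -- per-piece computation
  have hpiece : ∀ i, i + 1 < N → (∫ x in p i..p (i + 1), ψ x) =
      a i * (α i * M + A i * (pN ^ 2 - p₁ ^ 2) / 2 + B i * (pN - p₁) - α i * K) := by
    intro i hi
    have hai := hapos i hi
    have hane : a i ≠ 0 := ne_of_gt hai
    have hcomp : (∫ x in p₁..pN, ψ (a i * x + b i)) =
        (a i)⁻¹ • ∫ x in (a i * p₁ + b i)..(a i * pN + b i), ψ x :=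
      intervalIntegral.integral_comp_mul_add ψ hane (b i)
    rw [hS₁ i hi, hSN i hi] at hcomp
    have hinner : (∫ x in p₁..pN, ψ (a i * x + b i)) =
        ∫ x in p₁..pN, (α i * ψ x + ((A i - α i * ((qN - q₁) / (pN - p₁))) * x +
          (B i - α i * ((pN * q₁ - p₁ * qN) / (pN - p₁))))) := by
      apply intervalIntegral.integral_congr
      intro x hx
      rw [Set.uIcc_of_le hp1N.le] at hx
      show ψ (a i * x + b i) = _
      rw [hself i hi x hx]
      ring
    have hlinint : IntervalIntegrable
        (fun x : ℝ => (A i - α i * ((qN - q₁) / (pN - p₁))) * x +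
          (B i - α i * ((pN * q₁ - p₁ * qN) / (pN - p₁)))) MeasureTheory.volume p₁ pN :=
      ((continuous_const.mul continuous_id).add continuous_const).intervalIntegrable _ _
    rw [intervalIntegral.integral_add (hψint.const_mul _) hlinint,
      intervalIntegral.integral_const_mul, lin_int_aux] at hinner
    have := hcomp.symm.trans hinner
    rw [smul_eq_mul] at this
    have heq : (∫ x in p i..p (i + 1), ψ x) =
        a i * (α i * M + ((A i - α i * ((qN - q₁) / (pN - p₁))) * (pN ^ 2 - p₁ ^ 2) / 2 +
          (B i - α i * ((pN * q₁ - p₁ * qN) / (pN - p₁))) * (pN - p₁))) := by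
      rw [hM, ← this, ← mul_assoc, mul_inv_cancel₀ hane, one_mul]
    rw [heq, hK]
    field_simp
    ring
  -- telescoping
  have htel : M = ∑ i ∈ Finset.range (N - 1), ∫ x in p i..p (i + 1), ψ x := by
    rw [hM, hp₁, hpN]
    exact (intervalIntegral.sum_integral_adjacent_intervals
      (fun k hk => hint k (by omega))).symm
  have hexp : ∑ i ∈ Finset.range (N - 1),
        a i * (α i * M + A i * (pN ^ 2 - p₁ ^ 2) / 2 + B i * (pN - p₁) - α i * K) =
      (∑ i ∈ Finset.range (N - 1), a i * α i) * M +
      ((pN ^ 2 - p₁ ^ 2) / 2 * ∑ i ∈ Finset.range (N - 1), a i * A i +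
        (pN - p₁) * ∑ i ∈ Finset.range (N - 1), a i * B i -
        ∑ i ∈ Finset.range (N - 1), α i * a i * K) := by
    rw [Finset.sum_mul, Finset.mul_sum, Finset.mul_sum,
      ← Finset.sum_add_distrib, ← Finset.sum_sub_distrib, ← Finset.sum_add_distrib]
    exact Finset.sum_congr rfl fun i _ => by ring
  have hsum : M = (∑ i ∈ Finset.range (N - 1), a i * α i) * M +
      ((pN ^ 2 - p₁ ^ 2) / 2 * ∑ i ∈ Finset.range (N - 1), a i * A i +
        (pN - p₁) * ∑ i ∈ Finset.range (N - 1), a i * B i -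
        ∑ i ∈ Finset.range (N - 1), α i * a i * K) :=
    htel.trans ((Finset.sum_congr rfl fun i hi => hpiece i (by
      simp only [Finset.mem_range] at hi; omega)).trans hexp)
  have hden' : 1 - ∑ i ∈ Finset.range (N - 1), a i * α i ≠ 0 := by
    intro h
    apply hden
    have : ∑ i ∈ Finset.range (N - 1), a i * α i = 1 := by linarith
    rw [← this]
    exact Finset.sum_congr rfl (fun i _ => mul_comm _ _)
  rw [eq_div_iff hden']
  rw [hK] at hsum
  linarith [hsum]
end

section
/- With second-degree Bernstein polynomial B₂(g,p) = c_i p² + d_i p + e_i over [p₁,p_N] and g∘S_i(p) = A_i p + B_i, the fractal integral satisfies M₁ = [((p_N³-p₁³)/3) Σ_i (−α_i a_i c_i) + ((p_N²-p₁²)/2) Σ_i a_i(A_i − α_i d_i) + (p_N-p₁) Σ_i a_i(B_i − α_i e_i)] / (1 − Σ_i a_i α_i). -/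
open intervalIntegral

lemma poly_int_aux (u v w x₁ x₂ : ℝ) :
    ∫ x in x₁..x₂, (u * x ^ 2 + v * x + w) =
      u * ((x₂ ^ 3 - x₁ ^ 3) / 3) + v * ((x₂ ^ 2 - x₁ ^ 2) / 2) + w * (x₂ - x₁) := by
  have i2 : IntervalIntegrable (fun x : ℝ => u * x ^ 2) MeasureTheory.volume x₁ x₂ :=
    (Continuous.intervalIntegrable (by continuity) _ _)
  have i1 : IntervalIntegrable (fun x : ℝ => v * x) MeasureTheory.volume x₁ x₂ :=
    (Continuous.intervalIntegrable (by continuity) _ _)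
  have i0 : IntervalIntegrable (fun _ : ℝ => w) MeasureTheory.volume x₁ x₂ :=
    intervalIntegrable_const
  rw [intervalIntegral.integral_add (i2.add i1) i0, intervalIntegral.integral_add i2 i1,
    intervalIntegral.integral_const_mul, intervalIntegral.integral_const_mul,
    integral_pow, integral_id, intervalIntegral.integral_const, smul_eq_mul]
  push_cast
  ring

/-- Numerical integration formula with the second-degree Bernstein polynomial
in the IFS:
`M₁ = [((p_N³-p₁³)/3) Σ(−αᵢaᵢcᵢ) + ((p_N²-p₁²)/2) Σ aᵢ(Aᵢ−αᵢdᵢ)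
       + (p_N-p₁) Σ aᵢ(Bᵢ−αᵢeᵢ)] / (1 − Σ aᵢαᵢ)`.
(Indices `0,…,N-1` correspond to `1,…,N`; maps `i = 0,…,N-2`.) -/
theorem fractal_integral_bernstein_two
    (N : ℕ) (hN : 2 ≤ N) (p : ℕ → ℝ)
    (hp : ∀ i, i + 1 < N → p i < p (i + 1))
    (p₁ pN : ℝ) (hp₁ : p₁ = p 0) (hpN : pN = p (N - 1))
    (a b α A B c d e : ℕ → ℝ)
    (ha : ∀ i, i + 1 < N → a i = (p (i + 1) - p i) / (pN - p₁))
    (hS₁ : ∀ i, i + 1 < N → a i * p₁ + b i = p i)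
    (hSN : ∀ i, i + 1 < N → a i * pN + b i = p (i + 1))
    (hα : ∀ i, i + 1 < N → |α i| < 1)
    (ψ : ℝ → ℝ) (hψc : ContinuousOn ψ (Set.Icc p₁ pN))
    (hself : ∀ i, i + 1 < N → ∀ x ∈ Set.Icc p₁ pN,
      ψ (a i * x + b i) = α i * ψ x + A i * x + B i -
        α i * (c i * x ^ 2 + d i * x + e i))
    (hden : ∑ i ∈ Finset.range (N - 1), α i * a i ≠ 1) :
    ∫ x in p₁..pN, ψ x =
      (((pN ^ 3 - p₁ ^ 3) / 3) *
          ∑ i ∈ Finset.range (N - 1), (-(α i * a i * c i)) +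
        ((pN ^ 2 - p₁ ^ 2) / 2) *
          ∑ i ∈ Finset.range (N - 1), a i * (A i - α i * d i) +
        (pN - p₁) * ∑ i ∈ Finset.range (N - 1), a i * (B i - α i * e i)) /
      (1 - ∑ i ∈ Finset.range (N - 1), a i * α i) := by
  set nn := N - 1 with hnn
  have hn1 : 1 ≤ nn := by omega
  have hiN : ∀ i, i < nn → i + 1 < N := by omega
  -- monotonicity of p on 0..nn
  have hmono : ∀ j, j ≤ nn → ∀ i, i ≤ j → p i ≤ p j := by
    intro j
    induction j with
    | zero =>
      intro _ i hi
      have : i = 0 := by omega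
      simp [this]
    | succ k ih =>
      intro hj i hi
      rcases Nat.lt_or_ge i (k + 1) with h | h
      · exact le_trans (ih (by omega) i (by omega)) (le_of_lt (hp k (by omega)))
      · have : i = k + 1 := by omega
        simp [this]
  have hple : ∀ i, i ≤ nn → p₁ ≤ p i ∧ p i ≤ pN := fun i hi =>
    ⟨hp₁ ▸ hmono i hi 0 (Nat.zero_le _), hpN ▸ hmono nn le_rfl i hi⟩
  have hp1N : p₁ < pN := by
    rw [hp₁, hpN]
    exact lt_of_lt_of_le (hp 0 (by omega)) (hmono nn le_rfl 1 hn1)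
  have hψint : IntervalIntegrable ψ MeasureTheory.volume p₁ pN := by
    apply ContinuousOn.intervalIntegrable
    rwa [Set.uIcc_of_le hp1N.le]
  have hint : ∀ k, k < nn → IntervalIntegrable ψ MeasureTheory.volume (p k) (p (k + 1)) := by
    intro k hk
    apply ContinuousOn.intervalIntegrable
    apply hψc.mono
    rw [Set.uIcc_of_le (le_of_lt (hp k (hiN k hk)))]
    exact Set.Icc_subset_Icc (hple k (by omega)).1 (hple (k + 1) (by omega)).2
  set M := ∫ x in p₁..pN, ψ x with hM
  have hsplit : ∑ k ∈ Finset.range nn, ∫ x in p k..p (k + 1), ψ x = M := by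
    rw [intervalIntegral.sum_integral_adjacent_intervals hint, hM, hp₁, hpN]
  have hpiece : ∀ k, k < nn → (∫ x in p k..p (k + 1), ψ x) =
      a k * (α k * M + (-(α k * c k)) * ((pN ^ 3 - p₁ ^ 3) / 3)
        + (A k - α k * d k) * ((pN ^ 2 - p₁ ^ 2) / 2) + (B k - α k * e k) * (pN - p₁)) := by
    intro k hk
    have hk' := hiN k hk
    have hak : 0 < a k := by
      rw [ha k hk']
      exact div_pos (sub_pos.mpr (hp k hk')) (sub_pos.mpr hp1N)
    have h2 : (∫ x in p₁..pN, ψ (a k * x + b k))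
        = (a k)⁻¹ • ∫ x in (a k * p₁ + b k)..(a k * pN + b k), ψ x :=
      intervalIntegral.integral_comp_mul_add ψ hak.ne' (b k)
    have hcongr : (∫ x in p₁..pN, ψ (a k * x + b k))
        = ∫ x in p₁..pN, (α k * ψ x + ((-(α k * c k)) * x ^ 2
            + (A k - α k * d k) * x + (B k - α k * e k))) := by
      apply intervalIntegral.integral_congr
      intro x hx
      rw [Set.uIcc_of_le hp1N.le] at hx
      show ψ (a k * x + b k) = _
      rw [hself k hk' x hx]; ring
    have hpolyint : IntervalIntegrable (fun x : ℝ => (-(α k * c k)) * x ^ 2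
        + (A k - α k * d k) * x + (B k - α k * e k)) MeasureTheory.volume p₁ pN :=
      Continuous.intervalIntegrable (((continuous_const.mul (continuous_pow 2)).add
        (continuous_const.mul continuous_id)).add continuous_const) _ _
    have h4 : (∫ x in p₁..pN, (α k * ψ x + ((-(α k * c k)) * x ^ 2
        + (A k - α k * d k) * x + (B k - α k * e k))))
        = α k * M + ((-(α k * c k)) * ((pN ^ 3 - p₁ ^ 3) / 3)
          + (A k - α k * d k) * ((pN ^ 2 - p₁ ^ 2) / 2) + (B k - α k * e k) * (pN - p₁)) := by
      rw [intervalIntegral.integral_add (hψint.const_mul _) hpolyint,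
        intervalIntegral.integral_const_mul, poly_int_aux]
    have h5 : (∫ x in p k..p (k + 1), ψ x)
        = ∫ x in (a k * p₁ + b k)..(a k * pN + b k), ψ x := by
      rw [hS₁ k hk', hSN k hk']
    have h6 : (∫ x in (a k * p₁ + b k)..(a k * pN + b k), ψ x)
        = a k * ∫ x in p₁..pN, ψ (a k * x + b k) := by
      rw [h2, smul_eq_mul, ← mul_assoc, mul_inv_cancel₀ hak.ne', one_mul]
    rw [h5, h6, hcongr, h4]
    ring
  have hMsum : M = ∑ k ∈ Finset.range nn,
      a k * (α k * M + (-(α k * c k)) * ((pN ^ 3 - p₁ ^ 3) / 3)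
        + (A k - α k * d k) * ((pN ^ 2 - p₁ ^ 2) / 2) + (B k - α k * e k) * (pN - p₁)) := by
    conv_lhs => rw [← hsplit]
    exact Finset.sum_congr rfl fun k hk => hpiece k (Finset.mem_range.mp hk)
  have hexp : ∑ k ∈ Finset.range nn,
      a k * (α k * M + (-(α k * c k)) * ((pN ^ 3 - p₁ ^ 3) / 3)
        + (A k - α k * d k) * ((pN ^ 2 - p₁ ^ 2) / 2) + (B k - α k * e k) * (pN - p₁))
      = (∑ k ∈ Finset.range nn, a k * α k) * M
        + (((pN ^ 3 - p₁ ^ 3) / 3) * ∑ k ∈ Finset.range nn, (-(α k * a k * c k))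
          + ((pN ^ 2 - p₁ ^ 2) / 2) * ∑ k ∈ Finset.range nn, a k * (A k - α k * d k)
          + (pN - p₁) * ∑ k ∈ Finset.range nn, a k * (B k - α k * e k)) := by
    rw [Finset.sum_mul, Finset.mul_sum, Finset.mul_sum, Finset.mul_sum,
      ← Finset.sum_add_distrib, ← Finset.sum_add_distrib, ← Finset.sum_add_distrib]
    exact Finset.sum_congr rfl fun k _ => by ring
  have hden' : 1 - (∑ i ∈ Finset.range nn, a i * α i) ≠ 0 := by
    intro h
    apply hden
    have : (∑ i ∈ Finset.range nn, a i * α i) = 1 := by linarith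
    rw [← this]
    exact Finset.sum_congr rfl fun k _ => mul_comm _ _
  rw [eq_div_iff hden']
  have := hMsum.trans hexp
  ring_nf
  ring_nf at this
  linarith
end
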